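/- Monotonicity of extremal velocities: let T ∈ (0,∞) and let (x, v) be a solution of the ICS system on [0,T] with sup_i(‖x_i(0)‖ + ‖v_i(0)‖) < ∞. Then for each k ∈ {1,…,d}, the function t ↦ M^(k)(t) is non-increasing on [0,T] and the function t ↦ m^(k)(t) is non-decreasing on [0,T]. -/

import Mathlib

open Filter MeasureTheory
open scoped Topology

noncomputable section

/-- Componentwise sign-power map `Γ`. -/
def Gam (d : ℕ) (α : ℝ) (v : EuclideanSpace ℝ (Fin d)) : EuclideanSpace ℝ (Fin d) :=
  WithLp.toLp 2 (fun k => Real.sign (v k) * |v k| ^ α)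

/-- Right-hand side of the ICS velocity equation. -/
def icsRHS (d : ℕ) (κ α : ℝ) (m : ℕ → ℝ) (ψ : ℝ → ℝ)
    (x v : ℕ → ℝ → EuclideanSpace ℝ (Fin d)) (i : ℕ) (t : ℝ) :
    EuclideanSpace ℝ (Fin d) :=
  κ • ∑' j, (m j * ψ ‖x j t - x i t‖) • Gam d α (v j t - v i t)

/-- Solution of the infinite Cucker–Smale system on the set `s`, satisfying the ODE on `sInt`:
uniform boundedness on compact subsets, continuity, `ẋᵢ = vᵢ`, and
`v̇ᵢ = κ ∑ⱼ mⱼ ψ(‖xⱼ-xᵢ‖) Γ(vⱼ-vᵢ)` with the series converging absolutely. -/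
def IsICSSolOn (d : ℕ) (κ α : ℝ) (m : ℕ → ℝ) (ψ : ℝ → ℝ)
    (x v : ℕ → ℝ → EuclideanSpace ℝ (Fin d)) (s sInt : Set ℝ) : Prop :=
  (∀ K : Set ℝ, K ⊆ s → IsCompact K → ∃ C : ℝ, ∀ i, ∀ t ∈ K, ‖x i t‖ + ‖v i t‖ ≤ C) ∧
  (∀ i, ContinuousOn (x i) s) ∧
  (∀ i, ContinuousOn (v i) s) ∧
  (∀ i, ∀ t ∈ sInt,
      HasDerivAt (x i) (v i t) t ∧
      Summable (fun j => ‖(m j * ψ ‖x j t - x i t‖) • Gam d α (v j t - v i t)‖) ∧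
      HasDerivAt (v i) (icsRHS d κ α m ψ x v i t) t)

/-- Upper right Dini derivative `D⁺f(t) = limsup_{h→0⁺} (f(t+h)-f(t))/h`. -/
def diniUR (f : ℝ → ℝ) (t : ℝ) : ℝ :=
  limsup (fun h => (f (t + h) - f t) / h) (𝓝[>] (0 : ℝ))

/-- Lower right Dini derivative `D⁻f(t) = liminf_{h→0⁺} (f(t+h)-f(t))/h`. -/
def diniLR (f : ℝ → ℝ) (t : ℝ) : ℝ :=
  liminf (fun h => (f (t + h) - f t) / h) (𝓝[>] (0 : ℝ))

/-- `M^(k)(t) = sup_i v_i^k(t)`. -/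
def Msup (d : ℕ) (v : ℕ → ℝ → EuclideanSpace ℝ (Fin d)) (k : Fin d) (t : ℝ) : ℝ :=
  ⨆ i, v i t k

/-- `m^(k)(t) = inf_i v_i^k(t)`. -/
def minf (d : ℕ) (v : ℕ → ℝ → EuclideanSpace ℝ (Fin d)) (k : Fin d) (t : ℝ) : ℝ :=
  ⨅ i, v i t k

/-- Component velocity diameter `D_v^(k)(t) = M^(k)(t) - m^(k)(t)`. -/
def Dv (d : ℕ) (v : ℕ → ℝ → EuclideanSpace ℝ (Fin d)) (k : Fin d) (t : ℝ) : ℝ :=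
  Msup d v k t - minf d v k t

/-- Position diameter `D_x(t) = sup_{i,j} ‖x_i(t) - x_j(t)‖`. -/
def Dx (d : ℕ) (x : ℕ → ℝ → EuclideanSpace ℝ (Fin d)) (t : ℝ) : ℝ :=
  ⨆ p : ℕ × ℕ, ‖x p.1 t - x p.2 t‖

/-- Weighted `ℓ²_m` seminorm. -/
def wnorm (d : ℕ) (m : ℕ → ℝ) (u : ℕ → EuclideanSpace ℝ (Fin d)) : ℝ :=
  Real.sqrt (∑' i, m i * ‖u i‖ ^ 2)

/-!
Since `Γ` is odd and increasing with `Γ(u) ≤ S^α` for `u ≤ S`, each coordinate obeys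
`v̇_i^k ≤ κ (M^(k) - v_i^k)^α`: nobody is pushed above the current maximum. As the supremum runs
over infinitely many particles this has to be made uniform. Velocities are Lipschitz with a common
constant `B`, so over a step of length `h` a particle lying `a` below the maximum gains at most
`κ h (a + 2Bh)^α ≤ κ h a^α + κ h (2Bh)^α`, and Young's inequality
`κ h a^α ≤ α a + (1 - α) (κ h)^(1/(1-α))` bounds this by `a + o(h)` uniformly in `a`. Hence the
right Dini derivative of `M^(k)` is nonpositive and `M^(k)` is non-increasing. The claim for
`m^(k)` is the same statement for the reflected solution `(-x, -v)`.
-/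

open Set
open scoped NNReal

def signPow (α u : ℝ) : ℝ := Real.sign u * |u| ^ α

lemma signPow_neg (α u : ℝ) : signPow α (-u) = -signPow α u := by
  rw [signPow, signPow, Real.sign_neg, abs_neg, neg_mul]

lemma signPow_le_rpow {α u S : ℝ} (hα : 0 ≤ α) (hS : 0 ≤ S) (hu : u ≤ S) :
    signPow α u ≤ S ^ α := by
  rcases lt_trichotomy u 0 with hu0 | rfl | hu0
  · rw [signPow, Real.sign_of_neg hu0, neg_one_mul, neg_le]
    exact (neg_nonpos.2 (Real.rpow_nonneg hS α)).trans (Real.rpow_nonneg (abs_nonneg u) α)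
  · rw [signPow, Real.sign_zero, zero_mul]
    exact Real.rpow_nonneg hS α
  · rw [signPow, Real.sign_of_pos hu0, one_mul, abs_of_pos hu0]
    exact Real.rpow_le_rpow hu0.le hu hα

lemma mul_rpow_le_mul_add_mul_rpow {α a c : ℝ} (hα0 : 0 ≤ α) (hα1 : α < 1) (ha : 0 ≤ a)
    (hc : 0 ≤ c) : c * a ^ α ≤ α * a + (1 - α) * c ^ (1 - α)⁻¹ := by
  have h := Real.geom_mean_le_arith_mean2_weighted hα0 (sub_nonneg.2 hα1.le) ha
    (Real.rpow_nonneg hc (1 - α)⁻¹) (by ring)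
  rwa [← Real.rpow_mul hc, inv_mul_cancel₀ (sub_ne_zero.2 hα1.ne'), Real.rpow_one,
    mul_comm] at h

lemma iSup_neg_eq_neg_iInf {ι : Type*} (f : ι → ℝ) : ⨆ i, -f i = -⨅ i, f i := by
  rw [iInf, Real.sInf_def, neg_neg, iSup]
  congr 1
  ext y
  simp [neg_eq_iff_eq_neg]

lemma sub_le_mul_sub_of_hasDerivAt_le {g g' : ℝ → ℝ} {s t C : ℝ} (hst : s ≤ t)
    (hg : ContinuousOn g (Icc s t)) (hg' : ∀ τ ∈ Ioo s t, HasDerivAt g (g' τ) τ)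
    (hle : ∀ τ ∈ Ioo s t, g' τ ≤ C) : g t - g s ≤ C * (t - s) := by
  refine (convex_Icc s t).image_sub_le_mul_sub_of_deriv_le hg (fun τ hτ => ?_) (fun τ hτ => ?_)
    s (left_mem_Icc.2 hst) t (right_mem_Icc.2 hst) hst <;> rw [interior_Icc] at hτ
  · exact (hg' τ hτ).differentiableAt.differentiableWithinAt
  · rw [(hg' τ hτ).deriv]
    exact hle τ hτ

lemma lipschitzOnWith_of_hasDerivAt_abs_le {g g' : ℝ → ℝ} {a b B : ℝ}
    (hg : ContinuousOn g (Icc a b)) (hg' : ∀ τ ∈ Ioo a b, HasDerivAt g (g' τ) τ)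
    (hB : ∀ τ ∈ Ioo a b, |g' τ| ≤ B) : LipschitzOnWith B.toNNReal g (Icc a b) := by
  refine LipschitzOnWith.of_le_add_mul' B fun s hs t ht => ?_
  have hderiv {s t} (hs : s ∈ Icc a b) (ht : t ∈ Icc a b) : ∀ τ ∈ Ioo s t, HasDerivAt g (g' τ) τ :=
    fun τ hτ => hg' τ (Ioo_subset_Ioo hs.1 ht.2 hτ)
  rcases le_total s t with hst | hts
  · have := sub_le_mul_sub_of_hasDerivAt_le (g := fun τ => -g τ) hst
      (hg.mono (Icc_subset_Icc hs.1 ht.2)).neg (fun τ hτ => (hderiv hs ht τ hτ).neg)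
      (fun τ hτ => (neg_le_abs _).trans (hB τ (Ioo_subset_Ioo hs.1 ht.2 hτ)))
    rw [Real.dist_eq, abs_sub_comm, abs_of_nonneg (sub_nonneg.2 hst)]
    linarith
  · have := sub_le_mul_sub_of_hasDerivAt_le hts (hg.mono (Icc_subset_Icc ht.1 hs.2))
      (hderiv ht hs) (fun τ hτ => (le_abs_self _).trans (hB τ (Ioo_subset_Ioo ht.1 hs.2 hτ)))
    rw [Real.dist_eq, abs_of_nonneg (sub_nonneg.2 hts)]
    linarith

theorem LipschitzOnWith.ciSup {X ι : Type*} [PseudoMetricSpace X] [Nonempty ι] {s : Set X}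
    {K : ℝ≥0} {f : ι → X → ℝ} (hf : ∀ i, LipschitzOnWith K (f i) s)
    (hbdd : ∀ x ∈ s, BddAbove (range fun i => f i x)) :
    LipschitzOnWith K (fun x => ⨆ i, f i x) s :=
  LipschitzOnWith.of_le_add_mul K fun x hx y hy =>
    ciSup_le fun i => ((hf i).le_add_mul hx hy).trans (by gcongr; exact le_ciSup (hbdd y hy) i)

section iSupRate

variable {ι : Type*} [Nonempty ι] {f f' : ι → ℝ → ℝ} {a b κ α : ℝ} {K : ℝ≥0}

/- `(1 - α) (κ h)^(1/(1-α)) / h` is the Young remainder, `κ (2 K h)^α` the drift of the supremum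
over a step of length `h`. -/
def supSlopeBound (κ α : ℝ) (K : ℝ≥0) (h : ℝ) : ℝ :=
  (1 - α) * κ * (κ * h) ^ ((1 - α)⁻¹ - 1) + κ * (2 * K * h) ^ α

lemma tendsto_supSlopeBound (hα0 : 0 < α) (hα1 : α < 1) :
    Tendsto (supSlopeBound κ α K) (𝓝 0) (𝓝 0) := by
  have hq : 0 < (1 - α)⁻¹ - 1 := sub_pos.2 (one_lt_inv₀ (by linarith) |>.2 (by linarith))
  have hcont : Continuous (supSlopeBound κ α K) := by
    unfold supSlopeBound
    fun_prop (disch := first | exact hq.le | exact hα0.le)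
  simpa [supSlopeBound, Real.zero_rpow hq.ne', Real.zero_rpow hα0.ne'] using hcont.tendsto 0

lemma iSup_le_iSup_add_of_hasDerivAt_le_rpow (hκ : 0 ≤ κ) (hα0 : 0 < α) (hα1 : α < 1)
    (hlip : ∀ i, LipschitzOnWith K (f i) (Icc a b))
    (hbdd : ∀ t ∈ Icc a b, BddAbove (range fun i => f i t))
    (hderiv : ∀ i, ∀ t ∈ Ioo a b, HasDerivAt (f i) (f' i t) t)
    (hle : ∀ i, ∀ t ∈ Ioo a b, f' i t ≤ κ * ((⨆ j, f j t) - f i t) ^ α)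
    {t t' : ℝ} (ht : a ≤ t) (htt' : t < t') (ht' : t' ≤ b) :
    ⨆ i, f i t' ≤ (⨆ i, f i t) + (t' - t) * supSlopeBound κ α K (t' - t) := by
  set h := t' - t
  have hh0 : 0 < h := sub_pos.2 htt'
  have hsub : Icc t t' ⊆ Icc a b := Icc_subset_Icc ht ht'
  have htmem : t ∈ Icc a b := ⟨ht, htt'.le.trans ht'⟩
  have hMlip := LipschitzOnWith.ciSup hlip hbdd
  refine ciSup_le fun i => ?_
  set gap := (⨆ j, f j t) - f i t
  have hgap : 0 ≤ gap := sub_nonneg.2 (le_ciSup (hbdd t htmem) i)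
  -- on `[t, t']` the distance of `f i` to the supremum grows by at most `2 K h`
  have hrate : ∀ τ ∈ Ioo t t', f' i τ ≤ κ * (gap + 2 * K * h) ^ α := by
    intro τ hτ
    have hτmem : τ ∈ Icc a b := hsub (Ioo_subset_Icc_self hτ)
    have hdist : K * dist τ t ≤ K * h := by
      rw [Real.dist_eq, abs_of_pos (sub_pos.2 hτ.1)]
      exact mul_le_mul_of_nonneg_left (by linarith [hτ.2]) K.coe_nonneg
    have hM := hMlip.le_add_mul hτmem htmem
    have hf := (hlip i).le_add_mul htmem hτmem
    rw [dist_comm] at hf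
    refine (hle i τ (Ioo_subset_Ioo ht ht' hτ)).trans (mul_le_mul_of_nonneg_left
      (Real.rpow_le_rpow (sub_nonneg.2 (le_ciSup (hbdd τ hτmem) i)) ?_ hα0.le) hκ)
    linarith
  have hstep : f i t' - f i t ≤ κ * (gap + 2 * K * h) ^ α * h :=
    sub_le_mul_sub_of_hasDerivAt_le htt'.le ((hlip i).continuousOn.mono hsub)
      (fun τ hτ => hderiv i τ (Ioo_subset_Ioo ht ht' hτ)) hrate
  have hsubadd : κ * h * (gap + 2 * K * h) ^ α ≤ κ * h * (gap ^ α + (2 * K * h) ^ α) :=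
    mul_le_mul_of_nonneg_left
      (Real.rpow_add_le_add_rpow hgap (by positivity) hα0.le hα1.le) (by positivity)
  have hyoung : κ * h * gap ^ α ≤ α * gap + (1 - α) * (κ * h) ^ (1 - α)⁻¹ :=
    mul_rpow_le_mul_add_mul_rpow hα0.le hα1 hgap (by positivity)
  have hpow : (κ * h) ^ (1 - α)⁻¹ = h * (κ * (κ * h) ^ ((1 - α)⁻¹ - 1)) := by
    conv_lhs => rw [← sub_add_cancel (1 - α)⁻¹ 1]
    rw [Real.rpow_add' (by positivity) (by simp [sub_eq_zero, hα1.ne']), Real.rpow_one]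
    ring
  have hαgap : α * gap ≤ gap := mul_le_of_le_one_left hgap hα1.le
  rw [hpow] at hyoung
  rw [supSlopeBound]
  linarith

theorem antitoneOn_iSup_of_hasDerivAt_le_rpow (hκ : 0 ≤ κ) (hα0 : 0 < α) (hα1 : α < 1)
    (hlip : ∀ i, LipschitzOnWith K (f i) (Icc a b))
    (hbdd : ∀ t ∈ Icc a b, BddAbove (range fun i => f i t))
    (hderiv : ∀ i, ∀ t ∈ Ioo a b, HasDerivAt (f i) (f' i t) t)
    (hle : ∀ i, ∀ t ∈ Ioo a b, f' i t ≤ κ * ((⨆ j, f j t) - f i t) ^ α) :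
    AntitoneOn (fun t => ⨆ i, f i t) (Icc a b) := by
  intro s hs t ht hst
  refine image_le_of_liminf_slope_right_le_deriv_boundary (B := fun _ => ⨆ i, f i s) (B' := 0)
    ((LipschitzOnWith.ciSup hlip hbdd).continuousOn.mono (Icc_subset_Icc hs.1 ht.2)) le_rfl
    continuousOn_const (fun _ _ => hasDerivWithinAt_const _ _ _) ?_ ⟨hst, le_rfl⟩
  intro x hx r hr
  have hshift : Tendsto (fun z => z - x) (𝓝[>] x) (𝓝 0) :=
    tendsto_sub_nhds_zero_iff.2 nhdsWithin_le_nhds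
  have hsmall : ∀ᶠ z in 𝓝[>] x, supSlopeBound κ α K (z - x) < r :=
    ((tendsto_supSlopeBound hα0 hα1).comp hshift).eventually (gt_mem_nhds hr)
  refine ((hsmall.and (Ioo_mem_nhdsGT hx.2)).mono fun z ⟨hGz, hz⟩ => ?_).frequently
  have hzx : 0 < z - x := sub_pos.2 hz.1
  have hkey := iSup_le_iSup_add_of_hasDerivAt_le_rpow hκ hα0 hα1 hlip hbdd hderiv hle
    (hs.1.trans hx.1) hz.1 (hz.2.le.trans ht.2)
  rw [slope_def_field, div_lt_iff₀ hzx]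
  linarith [mul_lt_mul_of_pos_left hGz hzx]

end iSupRate

section ICS

variable {d : ℕ} {κ α : ℝ} {m : ℕ → ℝ} {ψ : ℝ → ℝ} {x v : ℕ → ℝ → EuclideanSpace ℝ (Fin d)}

lemma Gam_apply (w : EuclideanSpace ℝ (Fin d)) (k : Fin d) : Gam d α w k = signPow α (w k) := rfl

lemma Gam_neg (w : EuclideanSpace ℝ (Fin d)) : Gam d α (-w) = -Gam d α w := by
  ext k
  simp only [Gam_apply, PiLp.neg_apply, signPow_neg]

lemma icsRHS_neg (i : ℕ) (t : ℝ) :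
    icsRHS d κ α m ψ (fun j s => -x j s) (fun j s => -v j s) i t = -icsRHS d κ α m ψ x v i t := by
  simp only [icsRHS, neg_sub_neg, norm_sub_rev (x i t), ← smul_neg, ← tsum_neg, ← Gam_neg,
    neg_sub]

lemma IsICSSolOn.neg {s sInt : Set ℝ} (h : IsICSSolOn d κ α m ψ x v s sInt) :
    IsICSSolOn d κ α m ψ (fun i t => -x i t) (fun i t => -v i t) s sInt := by
  obtain ⟨hbd, hx, hv, hode⟩ := h
  refine ⟨fun K hK hKc => ?_, fun i => (hx i).neg, fun i => (hv i).neg, fun i t ht => ?_⟩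
  · simpa only [norm_neg] using hbd K hK hKc
  obtain ⟨hxd, hsum, hvd⟩ := hode i t ht
  refine ⟨hxd.neg, ?_, ?_⟩
  · simpa only [neg_sub_neg, norm_sub_rev (x i t), ← neg_sub (v i t), Gam_neg, smul_neg, norm_neg]
      using hsum
  · rw [icsRHS_neg]
    exact hvd.neg

lemma hasSum_icsRHS_apply {i : ℕ} {t : ℝ}
    (hsum : Summable fun j => ‖(m j * ψ ‖x j t - x i t‖) • Gam d α (v j t - v i t)‖) (k : Fin d) :
    HasSum (fun j => κ * (m j * ψ ‖x j t - x i t‖ * signPow α (v j t k - v i t k)))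
      (icsRHS d κ α m ψ x v i t k) :=
  ((EuclideanSpace.proj k).hasSum hsum.of_norm.hasSum).mul_left κ

lemma icsRHS_apply_le (hκ : 0 ≤ κ) (hα : 0 ≤ α) (hm0 : ∀ j, 0 ≤ m j) (hm : HasSum m 1)
    (hψ : MapsTo ψ (Ici 0) (Icc 0 1)) {i : ℕ} {t : ℝ}
    (hsum : Summable fun j => ‖(m j * ψ ‖x j t - x i t‖) • Gam d α (v j t - v i t)‖) {k : Fin d}
    {S : ℝ} (hS : 0 ≤ S) (hv : ∀ j, v j t k - v i t k ≤ S) :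
    icsRHS d κ α m ψ x v i t k ≤ κ * S ^ α := by
  have hbound : HasSum (fun j => κ * (m j * S ^ α)) (κ * S ^ α) := by
    simpa using (hm.mul_right (S ^ α)).mul_left κ
  refine hasSum_le (fun j => mul_le_mul_of_nonneg_left ?_ hκ) (hasSum_icsRHS_apply hsum k) hbound
  obtain ⟨hψ0, hψ1⟩ := hψ (norm_nonneg (x j t - x i t))
  calc m j * ψ ‖x j t - x i t‖ * signPow α (v j t k - v i t k)
      ≤ m j * ψ ‖x j t - x i t‖ * S ^ α :=
        mul_le_mul_of_nonneg_left (signPow_le_rpow hα hS (hv j)) (mul_nonneg (hm0 j) hψ0)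
    _ ≤ m j * S ^ α :=
        mul_le_mul_of_nonneg_right (mul_le_of_le_one_right (hm0 j) hψ1) (Real.rpow_nonneg hS α)

theorem IsICSSolOn.antitoneOn_Msup {a b : ℝ} (hsol : IsICSSolOn d κ α m ψ x v (Icc a b) (Ioo a b))
    (hκ : 0 ≤ κ) (hα0 : 0 < α) (hα1 : α < 1) (hm0 : ∀ j, 0 ≤ m j) (hm : HasSum m 1)
    (hψ : MapsTo ψ (Ici 0) (Icc 0 1)) (k : Fin d) : AntitoneOn (Msup d v k) (Icc a b) := by
  have hode_neg := hsol.neg.2.2.2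
  obtain ⟨hbd, -, hvc, hode⟩ := hsol
  obtain ⟨C, hC⟩ := hbd (Icc a b) subset_rfl isCompact_Icc
  have hvk : ∀ i, ∀ t ∈ Icc a b, |v i t k| ≤ C := fun i t ht =>
    (PiLp.norm_apply_le (v i t) k).trans (by linarith [hC i t ht, norm_nonneg (x i t)])
  have hbdd : ∀ t ∈ Icc a b, BddAbove (range fun i => v i t k) := fun t ht =>
    ⟨C, forall_mem_range.2 fun i => (abs_le.1 (hvk i t ht)).2⟩
  have hcont : ∀ i, ContinuousOn (fun τ => v i τ k) (Icc a b) := fun i =>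
    (EuclideanSpace.proj (𝕜 := ℝ) k).continuous.comp_continuousOn (hvc i)
  have hderiv : ∀ i, ∀ t ∈ Ioo a b,
      HasDerivAt (fun τ => v i τ k) (icsRHS d κ α m ψ x v i t k) t := fun i t ht =>
    (EuclideanSpace.proj (𝕜 := ℝ) k).hasFDerivAt.comp_hasDerivAt t (hode i t ht).2.2
  have hupper : ∀ i, ∀ t ∈ Ioo a b, ∀ S, 0 ≤ S → (∀ j, v j t k - v i t k ≤ S) →
      icsRHS d κ α m ψ x v i t k ≤ κ * S ^ α := fun i t ht _ hS hv =>
    icsRHS_apply_le hκ hα0.le hm0 hm hψ (hode i t ht).2.1 (k := k) hS hv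
  -- the lower rate bound is the upper one for the reflected solution `(-x, -v)`
  have hlower : ∀ i, ∀ t ∈ Ioo a b, ∀ S, 0 ≤ S → (∀ j, v i t k - v j t k ≤ S) →
      -icsRHS d κ α m ψ x v i t k ≤ κ * S ^ α := fun i t ht _ hS hv => by
    have := icsRHS_apply_le (x := fun i t => -x i t) (v := fun i t => -v i t) (k := k) hκ hα0.le
      hm0 hm hψ (hode_neg i t ht).2.1 hS fun j => by
        simpa only [PiLp.neg_apply, neg_sub_neg] using hv j
    rwa [icsRHS_neg, PiLp.neg_apply] at this
  have hderiv_le : ∀ i, ∀ t ∈ Ioo a b, |icsRHS d κ α m ψ x v i t k| ≤ κ * (2 * C) ^ α := by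
    intro i t ht
    have hvk' := fun j => abs_le.1 (hvk j t (Ioo_subset_Icc_self ht))
    have hC0 : 0 ≤ 2 * C := by linarith [(hvk' i).1, (hvk' i).2]
    exact abs_le.2 ⟨neg_le.1 (hlower i t ht _ hC0 fun j => by linarith [hvk' i, hvk' j]),
      hupper i t ht _ hC0 fun j => by linarith [hvk' i, hvk' j]⟩
  refine antitoneOn_iSup_of_hasDerivAt_le_rpow hκ hα0 hα1
    (fun i => lipschitzOnWith_of_hasDerivAt_abs_le (hcont i) (hderiv i) (hderiv_le i))
    hbdd hderiv fun i t ht => hupper i t ht _ ?_ fun j => ?_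
  · exact sub_nonneg.2 (le_ciSup (hbdd t (Ioo_subset_Icc_self ht)) i)
  · exact sub_le_sub_right (le_ciSup (hbdd t (Ioo_subset_Icc_self ht)) j) _

end ICS

theorem stmt5_general (d : ℕ) (κ : ℝ) (hκ : 0 < κ) (α : ℝ) (hα0 : 0 < α) (hα1 : α < 1)
    (m : ℕ → ℝ) (hm0 : ∀ j, 0 ≤ m j) (hmS : Summable m) (hm1 : ∑' j, m j = 1)
    (ψ : ℝ → ℝ)
    (hψanti : AntitoneOn ψ (Set.Ici 0)) (hψ0 : ψ 0 = 1)
    (hψnn : ∀ r, 0 ≤ r → 0 ≤ ψ r)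
    (T : ℝ)
    (x v : ℕ → ℝ → EuclideanSpace ℝ (Fin d))
    (hsol : IsICSSolOn d κ α m ψ x v (Set.Icc 0 T) (Set.Ioo 0 T))
    (k : Fin d) :
    AntitoneOn (Msup d v k) (Set.Icc 0 T) ∧ MonotoneOn (minf d v k) (Set.Icc 0 T) := by
  have hm : HasSum m 1 := hm1 ▸ hmS.hasSum
  have hψ : MapsTo ψ (Ici 0) (Icc 0 1) := fun r hr =>
    ⟨hψnn r hr, hψ0 ▸ hψanti self_mem_Ici hr hr⟩
  refine ⟨hsol.antitoneOn_Msup hκ.le hα0 hα1 hm0 hm hψ k, fun s hs t ht hst => ?_⟩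
  have := hsol.neg.antitoneOn_Msup hκ.le hα0 hα1 hm0 hm hψ k hs ht hst
  simpa only [Msup, minf, PiLp.neg_apply, iSup_neg_eq_neg_iInf, neg_le_neg_iff] using this

/-- Monotonicity of the extremal velocities: `M^(k)` is non-increasing and
`m^(k)` is non-decreasing on `[0,T]`. -/
theorem stmt5 (d : ℕ) (hd : 1 ≤ d) (κ : ℝ) (hκ : 0 < κ) (α : ℝ) (hα0 : 0 < α) (hα1 : α < 1)
    (m : ℕ → ℝ) (hm0 : ∀ j, 0 ≤ m j) (hmS : Summable m) (hm1 : ∑' j, m j = 1)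
    (ψ : ℝ → ℝ) (hψLip : ∃ L : NNReal, LipschitzOnWith L ψ (Set.Ici 0))
    (hψanti : AntitoneOn ψ (Set.Ici 0)) (hψ0 : ψ 0 = 1)
    (hψnn : ∀ r, 0 ≤ r → 0 ≤ ψ r)
    (T : ℝ) (hT : 0 < T)
    (x v : ℕ → ℝ → EuclideanSpace ℝ (Fin d))
    (hsol : IsICSSolOn d κ α m ψ x v (Set.Icc 0 T) (Set.Ioo 0 T))
    (hinit : ∃ C : ℝ, ∀ i, ‖x i 0‖ + ‖v i 0‖ ≤ C)
    (k : Fin d) :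
    AntitoneOn (Msup d v k) (Set.Icc 0 T) ∧ MonotoneOn (minf d v k) (Set.Icc 0 T) :=
  stmt5_general d κ hκ α hα0 hα1 m hm0 hmS hm1 ψ hψanti hψ0 hψnn T x v hsol k
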